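/- arXiv:1003.0349 — 2 statements merged into one kernel-verified Lean document; each statement's English description precedes it below -/
import Mathlib

section
/- Let M be a complete doubling metric space and {φ_i : i ∈ I} a semiconformal iterated function system on M such that the controlled Moran construction {φ_i(E) : i ∈ I*} has the finite clustering property. Then there exist a constant δ > 0 and a point x ∈ E such that B(φ_i(x), δ·diam(φ_i(E))) ∩ B(φ_j(x), δ·diam(φ_j(E))) = ∅ whenever i, j ∈ I* are incomparable. -/
open Metric Set Filter MeasureTheory Topology
open scoped ENNReal ENat

namespace Moran

/-- Composition of the maps of an IFS along a finite word:
`comp φ (i₁, …, iₙ) = φ i₁ ∘ ⋯ ∘ φ iₙ`. -/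
def comp {ι M : Type*} (φ : ι → M → M) : List ι → M → M
  | [] => id
  | a :: l => φ a ∘ comp φ l

/-- The initial segment (of length `n`) of an infinite word. -/
def pre {ι : Type*} (j : ℕ → ι) (n : ℕ) : List ι := List.ofFn fun k : Fin n => j k

/-- The cylinder set of a finite word, as a subset of the symbol space `I^∞`. -/
def cylinder {ι : Type*} (i : List ι) : Set (ℕ → ι) := {j | pre j i.length = i}

/-- Two finite words are incomparable if neither is an initial segment of the other. -/
def Incomp {ι : Type*} (i j : List ι) : Prop := ¬ i <+: j ∧ ¬ j <+: i

/-- A metric space is doubling if there is `κ` such that every ball of radius `2r`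
can be covered by `κ` balls of radius `r`. -/
def DoublingSpace (M : Type*) [MetricSpace M] : Prop :=
  ∃ κ : ℕ, ∀ (x : M) (r : ℝ), ∃ s : Finset M,
    s.card ≤ κ ∧ ball x (2 * r) ⊆ ⋃ y ∈ s, ball y r

/-- A weakly controlled Moran construction (WCMC) over the index set `ι`
in the metric space `M`. The sets are indexed by nonempty finite words,
modelled as nonempty lists; `i.dropLast` plays the role of `i⁻`. -/
structure WCMC (ι M : Type*) [Fintype ι] [MetricSpace M] where
  X : List ι → Set M
  compact : ∀ i : List ι, i ≠ [] → IsCompact (X i)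
  diam_pos : ∀ i : List ι, i ≠ [] → 0 < diam (X i)
  D : ℝ
  one_le_D : 1 ≤ D
  nested : ∀ i : List ι, 2 ≤ i.length → X i ⊆ X i.dropLast
  small : ∃ n : ℕ, 1 ≤ n ∧ ∀ i : List ι, i.length = n → diam (X i) < D⁻¹
  submult : ∀ i j : List ι, i ≠ [] → j ≠ [] →
    diam (X (i ++ j)) ≤ D * diam (X i) * diam (X j)
  lower : ∀ i : List ι, 2 ≤ i.length → D⁻¹ * diam (X i.dropLast) ≤ diam (X i)

/-- A controlled Moran construction (CMC). -/
structure CMC (ι M : Type*) [Fintype ι] [MetricSpace M] where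
  X : List ι → Set M
  compact : ∀ i : List ι, i ≠ [] → IsCompact (X i)
  diam_pos : ∀ i : List ι, i ≠ [] → 0 < diam (X i)
  D : ℝ
  one_le_D : 1 ≤ D
  nested : ∀ i : List ι, 2 ≤ i.length → X i ⊆ X i.dropLast
  small : ∃ n : ℕ, 1 ≤ n ∧ ∀ i : List ι, i.length = n → diam (X i) < D⁻¹
  controlled_le : ∀ i j : List ι, i ≠ [] → j ≠ [] →
    diam (X (i ++ j)) ≤ D * (diam (X i) * diam (X j))
  controlled_ge : ∀ i j : List ι, i ≠ [] → j ≠ [] →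
    D⁻¹ * (diam (X i) * diam (X j)) ≤ diam (X (i ++ j))

/-- The limit set `E = π(I^∞)` of a Moran construction. -/
def limitSet {ι M : Type*} [MetricSpace M] (X : List ι → Set M) : Set M :=
  {x | ∃ j : ℕ → ι, ∀ n : ℕ, 1 ≤ n → x ∈ X (pre j n)}

/-- `Z(r)`: the words whose construction piece has diameter at most `r` while the
parent piece has diameter greater than `r` (first-generation words with diameter
at most `r` are included). -/
def Zr {ι M : Type*} [MetricSpace M] (X : List ι → Set M) (r : ℝ) : Set (List ι) :=
  {i | i ≠ [] ∧ diam (X i) ≤ r ∧ (i.length = 1 ∨ r < diam (X i.dropLast))}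

/-- `Z(x,r)`: the words of `Z(r)` whose construction piece meets `B(x,r)`. -/
def Zx {ι M : Type*} [MetricSpace M] (X : List ι → Set M) (x : M) (r : ℝ) :
    Set (List ι) :=
  {i | i ∈ Zr X r ∧ (X i ∩ ball x r).Nonempty}

/-- The finite clustering property: `sup_{x ∈ E} limsup_{r ↓ 0} #Z(x,r) < ∞`. -/
def FCP {ι M : Type*} [MetricSpace M] (X : List ι → Set M) : Prop :=
  ∃ K : ℕ, ∀ x ∈ limitSet X,
    Filter.limsup (fun r : ℝ => (Zx X x r).encard) (𝓝[>] 0) ≤ (K : ℕ∞)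

/-- The ball condition. -/
def BallCond {ι M : Type*} [MetricSpace M] (X : List ι → Set M) : Prop :=
  ∃ δ : ℝ, 0 < δ ∧ δ < 1 ∧ ∀ x ∈ limitSet X, ∃ rx > 0, ∀ r : ℝ, 0 < r → r < rx →
    ∃ c : List ι → M, (∀ i ∈ Zx X x r, infDist (c i) (X i) < r) ∧
      (Zx X x r).Pairwise fun i j => Disjoint (ball (c i) (δ * r)) (ball (c j) (δ * r))

/-- Distance between two subsets of a metric space. -/
noncomputable def setDist {M : Type*} [MetricSpace M] (s t : Set M) : ℝ :=
  ENNReal.toReal (⨅ x ∈ s, EMetric.infEdist x t)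

/-- Tractability of a Moran construction. -/
def Tractable {ι M : Type*} [MetricSpace M] (X : List ι → Set M) : Prop :=
  ∃ C : ℝ, 1 ≤ C ∧ ∀ r : ℝ, 0 < r → ∀ h i j : List ι, h ≠ [] →
    i ∈ Zr X r → j ∈ Zr X r → setDist (X i) (X j) ≤ r →
      setDist (X (h ++ i)) (X (h ++ j)) ≤ C * diam (X h) * r

/-- The `n`-th pressure sum `Σ_{i ∈ I^n} diam(X_i)^t`. -/
noncomputable def presSum {ι M : Type*} [Fintype ι] [MetricSpace M]
    (X : List ι → Set M) (t : ℝ) (n : ℕ) : ℝ :=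
  ∑ i : Fin n → ι, diam (X (List.ofFn i)) ^ t

/-- `P` is the topological pressure of the construction `X`:
`P(t) = lim_{n → ∞} (1/n) log Σ_{i ∈ I^n} diam(X_i)^t` for every `t ≥ 0`. -/
def IsPressure {ι M : Type*} [Fintype ι] [MetricSpace M]
    (X : List ι → Set M) (P : ℝ → ℝ) : Prop :=
  ∀ t : ℝ, 0 ≤ t →
    Tendsto (fun n : ℕ => (1 / (n : ℝ)) * Real.log (presSum X t n)) atTop (𝓝 (P t))

/-- The covering number `N(E,r)`: the minimal number of open balls of radius `r`
needed to cover `E`. -/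
noncomputable def coverNum {M : Type*} [MetricSpace M] (E : Set M) (r : ℝ) : ℕ :=
  sInf {k : ℕ | ∃ s : Finset M, s.card = k ∧ E ⊆ ⋃ y ∈ s, ball y r}

/-- The upper Minkowski dimension `limsup_{r ↓ 0} log N(E,r) / (−log r)`. -/
noncomputable def upMink {M : Type*} [MetricSpace M] (E : Set M) : EReal :=
  Filter.limsup
    (fun r : ℝ => ((Real.log (coverNum E r) / (-Real.log r) : ℝ) : EReal)) (𝓝[>] 0)

/-- The `n`-th stage `M^ψ_n(A)` of the Carathéodory construction on the symbol
space: the infimum of `Σ_{i ∈ C} ψ(i)` over covers of `A` by cylinders of words of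
length at least `n`. -/
noncomputable def Mpsin {ι : Type*} (ψ : List ι → ℝ) (n : ℕ) (A : Set (ℕ → ι)) :
    ℝ≥0∞ :=
  ⨅ (C : Set (List ι)) (_ : ∀ i ∈ C, i ≠ [] ∧ n ≤ i.length)
    (_ : A ⊆ ⋃ i ∈ C, cylinder i), ∑' i : C, ENNReal.ofReal (ψ i)

/-- `M^ψ(A) = lim_{n → ∞} M^ψ_n(A)`; since the stages are nondecreasing in `n`,
the limit equals the supremum. -/
noncomputable def Mpsi {ι : Type*} (ψ : List ι → ℝ) (A : Set (ℕ → ι)) : ℝ≥0∞ :=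
  ⨆ n : ℕ, Mpsin ψ n A

/-- A semiconformal iterated function system on `M`: finitely many contractive
injections `φ i` whose invariant set `E` has positive diameter, together with
semiconformality bounds `s̲_i, s̄_i` (comparable via `D`) for the iterated maps. -/
structure SCIFS (ι M : Type*) [Fintype ι] [MetricSpace M] where
  φ : ι → M → M
  contr : ∀ i : ι, ∃ s : ℝ, 0 ≤ s ∧ s < 1 ∧ ∀ x y : M, dist (φ i x) (φ i y) ≤ s * dist x y
  inj : ∀ i : ι, Function.Injective (φ i)
  E : Set M
  E_compact : IsCompact E
  E_nonempty : E.Nonempty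
  E_invariant : E = ⋃ i : ι, φ i '' E
  diamE_pos : 0 < diam E
  slo : List ι → ℝ
  shi : List ι → ℝ
  D : ℝ
  one_le_D : 1 ≤ D
  slo_pos : ∀ i : List ι, i ≠ [] → 0 < slo i
  slo_le_shi : ∀ i : List ι, i ≠ [] → slo i ≤ shi i
  shi_lt_one : ∀ i : List ι, i ≠ [] → shi i < 1
  shi_le_D_slo : ∀ i : List ι, i ≠ [] → shi i ≤ D * slo i
  lower : ∀ i : List ι, i ≠ [] → ∀ x y : M,
    slo i * dist x y ≤ dist (comp φ i x) (comp φ i y)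
  upper : ∀ i : List ι, i ≠ [] → ∀ x y : M,
    dist (comp φ i x) (comp φ i y) ≤ shi i * dist x y

/-- The Moran construction pieces `E_i = φ_i(E)` associated with an IFS. -/
def SCIFS.Xs {ι M : Type*} [Fintype ι] [MetricSpace M] (S : SCIFS ι M) :
    List ι → Set M := fun i => comp S.φ i '' S.E

/-- The open set condition. -/
def OSC {ι M : Type*} [Fintype ι] [MetricSpace M] (S : SCIFS ι M) : Prop :=
  ∃ U : Set M, IsOpen U ∧ U.Nonempty ∧ ∀ i j : List ι, i ≠ [] → j ≠ [] →
    Incomp i j → Disjoint (comp S.φ i '' U) (comp S.φ j '' U)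

/-- The strong open set condition. -/
def SOSC {ι M : Type*} [Fintype ι] [MetricSpace M] (S : SCIFS ι M) : Prop :=
  ∃ U : Set M, IsOpen U ∧ U.Nonempty ∧ (U ∩ S.E).Nonempty ∧
    ∀ i j : List ι, i ≠ [] → j ≠ [] →
      Incomp i j → Disjoint (comp S.φ i '' U) (comp S.φ j '' U)

/-- An essential open set for an IFS: a dense open set meeting the invariant set. -/
def EssentialOpen {ι M : Type*} [Fintype ι] [MetricSpace M] (S : SCIFS ι M)
    (W : Set M) : Prop :=
  IsOpen W ∧ Dense W ∧ (W ∩ S.E).Nonempty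

/-- A properly semiconformal IFS. -/
def ProperlySC {ι M : Type*} [Fintype ι] [MetricSpace M] (S : SCIFS ι M) : Prop :=
  ∃ W : Set M, EssentialOpen S W ∧ W ≠ univ ∧ ∀ x ∈ W, ∃ lam : ℝ, 1 ≤ lam ∧
    ∀ i : List ι, i ≠ [] →
      infDist (comp S.φ i x) (comp S.φ i '' Wᶜ) ≤
        lam * infDist (comp S.φ i x) ((comp S.φ i '' W)ᶜ)

end Moran

/-!
Suppose that no such `δ` and `x` exist. Two incomparable words whose balls meet share a common
prefix `k`; removing `φ_k`, which distorts distances and diameters by boundedly comparable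
factors, leaves at every `y ∈ E` and every `δ > 0` two branches starting with different letters
whose images of `y` are `δ`-close relative to their size. Iterating this `m` times, each time
pushing the previous configuration forward by the new branch, gives a piece `X_w`, a point
`y ∈ X_w` and `m` branches splitting off the path to `w`, all passing within `ε diam X_w` of `y`
and all of diameter at least `c diam X_w`. Extend `w` to a word `V` with `y ∈ X_V` and
`diam X_V ≤ ε diam X_w`, and let `y*` lie in every `X_{Vⁿ}`. Mapping the configuration by
`φ_{Vⁿ}` and refining at the scale `ρₙ ≍ diam X_{Vⁿw}` yields `m + 1` pairwise incomparable
words of `Z(y*, ρₙ)`; since `ρₙ → 0`, this contradicts the finite clustering property as soon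
as `m` exceeds its bound.
-/

namespace Moran

open scoped Function

variable {ι M : Type*}

section Words

theorem comp_append (φ : ι → M → M) :
    ∀ u v : List ι, comp φ (u ++ v) = comp φ u ∘ comp φ v
  | [], _ => rfl
  | a :: u, v => congrArg (φ a ∘ ·) (comp_append φ u v)

theorem pre_succ (τ : ℕ → ι) (n : ℕ) : pre τ (n + 1) = pre τ n ++ [τ n] := by
  rw [pre, List.ofFn_succ']
  simp [pre, List.concat_eq_append]

theorem Incomp.symm {i j : List ι} (h : Incomp i j) : Incomp j i := ⟨h.2, h.1⟩

theorem Incomp.ne {i j : List ι} (h : Incomp i j) : i ≠ j := by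
  rintro rfl
  exact h.1 (List.prefix_refl i)

theorem Incomp.exists_common_prefix : ∀ {i j : List ι}, Incomp i j →
    ∃ (k : List ι) (a b : ι) (i' j' : List ι), a ≠ b ∧ i = k ++ a :: i' ∧ j = k ++ b :: j'
  | [], _, h => absurd List.nil_prefix h.1
  | _ :: _, [], h => absurd List.nil_prefix h.2
  | a :: i, b :: j, h => by
    by_cases hab : a = b
    · subst hab
      have h' : Incomp i j := ⟨fun hp => h.1 (List.cons_prefix_cons.2 ⟨rfl, hp⟩),
        fun hp => h.2 (List.cons_prefix_cons.2 ⟨rfl, hp⟩)⟩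
      obtain ⟨k, c, d, i', j', hcd, rfl, rfl⟩ := h'.exists_common_prefix
      exact ⟨a :: k, c, d, i', j', hcd, rfl, rfl⟩
    · exact ⟨[], a, b, i, j, hab, rfl, rfl⟩

theorem incomp_of_prefix {k x y : List ι} {a b : ι} (hab : a ≠ b)
    (ha : k ++ [a] <+: x) (hb : k ++ [b] <+: y) : Incomp x y := by
  have key : ∀ {a b : ι} {x y : List ι}, a ≠ b → k ++ [a] <+: x → k ++ [b] <+: y →
      ¬ x <+: y :=
    fun hab ha hb hxy => hab <| by
      simpa using (List.prefix_of_prefix_length_le (ha.trans hxy) hb (by simp)).eq_of_length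
        (by simp)
  exact ⟨key hab ha hb, key hab.symm hb ha⟩

theorem pairwise_incomp_cons {m : ℕ} {g : Fin m → List ι} {A B : Fin m → ι} {v₀ : List ι}
    {v : Fin m → List ι} (hAB : ∀ l, A l ≠ B l)
    (hchain : ∀ l l', l < l' → g l ++ [A l] <+: g l') (hv₀ : ∀ l, g l ++ [A l] <+: v₀)
    (hv : ∀ l, g l ++ [B l] <+: v l) :
    Pairwise (Incomp on (Fin.cons v₀ v : Fin (m + 1) → List ι)) := by
  have hlt : ∀ l l', l < l' → Incomp (v l) (v l') := fun l l' h =>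
    incomp_of_prefix (hAB l).symm (hv l)
      ((hchain l l' h).trans ((List.prefix_append _ _).trans (hv l')))
  have h0 : ∀ l, Incomp v₀ (v l) := fun l => incomp_of_prefix (hAB l) (hv₀ l) (hv l)
  intro k l hkl
  simp only [Function.onFun]
  cases k using Fin.cases with
  | zero =>
    cases l using Fin.cases with
    | zero => exact absurd rfl hkl
    | succ l => simpa using h0 l
  | succ k =>
    cases l using Fin.cases with
    | zero => simpa using (h0 k).symm
    | succ l =>
      simp only [Fin.cons_succ]
      rcases lt_trichotomy k l with h | rfl | h
      exacts [hlt k l h, absurd rfl hkl, (hlt l k h).symm]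

theorem le_encard_of_pairwise_incomp {n : ℕ} {s : Set (List ι)} (f : Fin n → List ι)
    (hf : Pairwise (Incomp on f)) (hs : ∀ k, f k ∈ s) : (n : ℕ∞) ≤ s.encard := by
  have hinj : Set.InjOn f univ := fun k _ l _ hkl => by
    by_contra hne
    exact (hf hne).ne hkl
  simpa using Set.encard_le_encard_of_injOn (fun k _ => hs k) hinj

end Words

namespace SCIFS

variable [Fintype ι] [MetricSpace M] (S : SCIFS ι M)

/-- The semiconformality constants `s̲_u` and `s̄_u`, extended by `1` to the empty word, where
`comp S.φ [] = id`. -/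
noncomputable def lowerRatio (u : List ι) : ℝ := if u = [] then 1 else S.slo u

noncomputable def upperRatio (u : List ι) : ℝ := if u = [] then 1 else S.shi u

theorem D_pos : 0 < S.D := one_pos.trans_le S.one_le_D

theorem lowerRatio_pos (u : List ι) : 0 < S.lowerRatio u := by
  unfold lowerRatio; split_ifs with h
  exacts [one_pos, S.slo_pos u h]

theorem upperRatio_le (u : List ι) : S.upperRatio u ≤ S.D * S.lowerRatio u := by
  unfold upperRatio lowerRatio; split_ifs with h
  exacts [by simpa using S.one_le_D, S.shi_le_D_slo u h]

theorem upperRatio_nonneg (u : List ι) : 0 ≤ S.upperRatio u := by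
  unfold upperRatio; split_ifs with h
  exacts [zero_le_one, (S.slo_pos u h).le.trans (S.slo_le_shi u h)]

theorem dist_comp_le (u : List ι) (x y : M) :
    dist (comp S.φ u x) (comp S.φ u y) ≤ S.upperRatio u * dist x y := by
  unfold upperRatio; split_ifs with h
  · simp [h, comp]
  · exact S.upper u h x y

theorem lowerRatio_mul_dist_le (u : List ι) (x y : M) :
    S.lowerRatio u * dist x y ≤ dist (comp S.φ u x) (comp S.φ u y) := by
  unfold lowerRatio; split_ifs with h
  · simp [h, comp]
  · exact S.lower u h x y

theorem continuous_comp (u : List ι) : Continuous (comp S.φ u) :=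
  (LipschitzWith.of_dist_le_mul (K := (S.upperRatio u).toNNReal) fun x y => by
    rw [Real.coe_toNNReal _ (S.upperRatio_nonneg u)]
    exact S.dist_comp_le u x y).continuous

theorem exists_φ_eq_of_mem {x : M} (hx : x ∈ S.E) : ∃ a, ∃ x' ∈ S.E, S.φ a x' = x := by
  rw [S.E_invariant, mem_iUnion] at hx
  obtain ⟨a, x', hx', rfl⟩ := hx
  exact ⟨a, x', hx', rfl⟩

theorem comp_mem_E {x : M} (hx : x ∈ S.E) : ∀ u : List ι, comp S.φ u x ∈ S.E
  | [] => hx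
  | a :: u => by
    rw [S.E_invariant]
    exact mem_iUnion.2 ⟨a, comp S.φ u x, comp_mem_E hx u, rfl⟩

theorem Xs_nil : S.Xs [] = S.E := image_id _

theorem Xs_subset_E (u : List ι) : S.Xs u ⊆ S.E := by
  rintro _ ⟨x, hx, rfl⟩
  exact S.comp_mem_E hx u

theorem Xs_append (u v : List ι) : S.Xs (u ++ v) = comp S.φ u '' S.Xs v := by
  rw [Xs, Xs, comp_append, image_comp]

theorem Xs_anti {u v : List ι} (h : u <+: v) : S.Xs v ⊆ S.Xs u := by
  obtain ⟨t, rfl⟩ := h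
  rw [Xs_append]
  exact image_mono (S.Xs_subset_E t)

theorem isCompact_Xs (u : List ι) : IsCompact (S.Xs u) :=
  S.E_compact.image (S.continuous_comp u)

theorem isBounded_Xs (u : List ι) : Bornology.IsBounded (S.Xs u) :=
  (S.isCompact_Xs u).isBounded

theorem exists_mem_Xs_append_singleton {u : List ι} {z : M} (hz : z ∈ S.Xs u) :
    ∃ a, z ∈ S.Xs (u ++ [a]) := by
  obtain ⟨x, hx, rfl⟩ := hz
  obtain ⟨a, x', hx', rfl⟩ := S.exists_φ_eq_of_mem hx
  exact ⟨a, by rw [Xs_append]; exact ⟨S.φ a x', ⟨x', hx', rfl⟩, rfl⟩⟩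

theorem diam_Xs_le_diam_E (u : List ι) : diam (S.Xs u) ≤ diam S.E :=
  diam_mono (S.Xs_subset_E u) S.E_compact.isBounded

theorem diam_Xs_append_le (u v : List ι) :
    diam (S.Xs (u ++ v)) ≤ S.upperRatio u * diam (S.Xs v) := by
  rw [Xs_append]
  refine diam_le_of_forall_dist_le (by positivity [S.upperRatio_nonneg u]) ?_
  rintro _ ⟨p, hp, rfl⟩ _ ⟨q, hq, rfl⟩
  exact (S.dist_comp_le u p q).trans <| mul_le_mul_of_nonneg_left
    (dist_le_diam_of_mem (S.isBounded_Xs v) hp hq) (S.upperRatio_nonneg u)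

theorem lowerRatio_mul_diam_le (u v : List ι) :
    S.lowerRatio u * diam (S.Xs v) ≤ diam (S.Xs (u ++ v)) := by
  rw [mul_comm, ← le_div_iff₀ (S.lowerRatio_pos u)]
  refine diam_le_of_forall_dist_le (by positivity [S.lowerRatio_pos u]) fun p hp q hq => ?_
  rw [le_div_iff₀ (S.lowerRatio_pos u), mul_comm]
  refine (S.lowerRatio_mul_dist_le u p q).trans (dist_le_diam_of_mem (S.isBounded_Xs _) ?_ ?_)
  all_goals rw [Xs_append]; exact mem_image_of_mem _ ‹_›

theorem diam_Xs_pos (u : List ι) : 0 < diam (S.Xs u) := by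
  have h := S.lowerRatio_mul_diam_le u []
  rw [List.append_nil, Xs_nil] at h
  exact (mul_pos (S.lowerRatio_pos u) S.diamE_pos).trans_le h

theorem exists_pos_mul_diam_E_le :
    ∃ c, 0 < c ∧ c ≤ 1 ∧ ∀ a, c * diam S.E ≤ diam (S.Xs [a]) := by
  obtain ⟨x, hx⟩ := S.E_nonempty
  have : Nonempty ι := let ⟨a, _⟩ := S.exists_φ_eq_of_mem hx; ⟨a⟩
  obtain ⟨a₀, ha₀⟩ := Finite.exists_min fun a => diam (S.Xs [a])
  refine ⟨diam (S.Xs [a₀]) / diam S.E, div_pos (S.diam_Xs_pos _) S.diamE_pos,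
    (div_le_one S.diamE_pos).2 (S.diam_Xs_le_diam_E _), fun a => ?_⟩
  rw [div_mul_cancel₀ _ S.diamE_pos.ne']
  exact ha₀ a

/-- Bounded distortion: `φ_u` scales all pieces by comparable factors. -/
theorem diam_Xs_append_mul_le (u v w : List ι) :
    diam (S.Xs (u ++ v)) * diam (S.Xs w) ≤ S.D * diam (S.Xs v) * diam (S.Xs (u ++ w)) :=
  calc diam (S.Xs (u ++ v)) * diam (S.Xs w)
      ≤ S.D * S.lowerRatio u * diam (S.Xs v) * diam (S.Xs w) := by
        gcongr
        exact (S.diam_Xs_append_le u v).trans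
          (mul_le_mul_of_nonneg_right (S.upperRatio_le u) diam_nonneg)
    _ = S.D * diam (S.Xs v) * (S.lowerRatio u * diam (S.Xs w)) := by ring
    _ ≤ S.D * diam (S.Xs v) * diam (S.Xs (u ++ w)) :=
        mul_le_mul_of_nonneg_left (S.lowerRatio_mul_diam_le u w)
          (mul_nonneg S.D_pos.le diam_nonneg)

theorem dist_comp_mul_le (u w : List ι) (x y : M) :
    dist (comp S.φ u x) (comp S.φ u y) * diam (S.Xs w) ≤
      S.D * dist x y * diam (S.Xs (u ++ w)) :=
  calc dist (comp S.φ u x) (comp S.φ u y) * diam (S.Xs w)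
      ≤ S.D * S.lowerRatio u * dist x y * diam (S.Xs w) := by
        gcongr
        exact (S.dist_comp_le u x y).trans
          (mul_le_mul_of_nonneg_right (S.upperRatio_le u) dist_nonneg)
    _ = S.D * dist x y * (S.lowerRatio u * diam (S.Xs w)) := by ring
    _ ≤ S.D * dist x y * diam (S.Xs (u ++ w)) :=
        mul_le_mul_of_nonneg_left (S.lowerRatio_mul_diam_le u w)
          (mul_nonneg S.D_pos.le dist_nonneg)

theorem exists_forall_mem_Xs_pre {x : M} (hx : x ∈ S.E) :
    ∃ τ : ℕ → ι, ∀ n, x ∈ S.Xs (pre τ n) := by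
  choose letter parent parent_mem hletter using fun p : S.E => S.exists_φ_eq_of_mem p.2
  let orbit : ℕ → S.E := fun n => (fun p => ⟨parent p, parent_mem p⟩)^[n] ⟨x, hx⟩
  let τ : ℕ → ι := fun n => letter (orbit n)
  have key : ∀ n, comp S.φ (pre τ n) (orbit n) = x := by
    intro n
    induction n with
    | zero => rfl
    | succ n ih =>
      rw [pre_succ, comp_append, Function.comp_apply, ← ih]
      exact congrArg _ (by simp only [orbit, Function.iterate_succ_apply']; exact hletter _)
  exact ⟨τ, fun n => ⟨orbit n, (orbit n).2, key n⟩⟩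

theorem mem_limitSet {x : M} (hx : x ∈ S.E) : x ∈ limitSet S.Xs :=
  let ⟨τ, hτ⟩ := S.exists_forall_mem_Xs_pre hx
  ⟨τ, fun n _ => hτ n⟩

theorem exists_length_diam_Xs_le {ρ : ℝ} (hρ : 0 < ρ) :
    ∃ N, ∀ u : List ι, N ≤ u.length → diam (S.Xs u) ≤ ρ := by
  obtain ⟨σ, hσ0, hσ1, hσ⟩ : ∃ σ, 0 ≤ σ ∧ σ < 1 ∧ ∀ a, S.shi [a] ≤ σ := by
    cases isEmpty_or_nonempty ι
    · exact ⟨0, le_rfl, one_pos, isEmptyElim⟩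
    · obtain ⟨a, ha⟩ := Finite.exists_max fun a => S.shi [a]
      exact ⟨S.shi [a], (S.slo_pos _ (by simp)).le.trans (S.slo_le_shi _ (by simp)),
        S.shi_lt_one _ (by simp), ha⟩
  have hpow : ∀ u : List ι, diam (S.Xs u) ≤ σ ^ u.length * diam S.E := by
    intro u
    induction u with
    | nil => simp [Xs_nil]
    | cons a u ih =>
      calc diam (S.Xs ([a] ++ u)) ≤ S.shi [a] * diam (S.Xs u) := by
            simpa [upperRatio] using S.diam_Xs_append_le [a] u
        _ ≤ σ * (σ ^ u.length * diam S.E) := by gcongr; exact hσ a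
        _ = σ ^ (a :: u).length * diam S.E := by rw [List.length_cons, pow_succ]; ring
  obtain ⟨N, hN⟩ := exists_pow_lt_of_lt_one (div_pos hρ S.diamE_pos) hσ1
  refine ⟨N, fun u hu => (hpow u).trans ?_⟩
  rw [← le_div_iff₀ S.diamE_pos]
  exact (pow_le_pow_of_le_one hσ0 hσ1.le hu).trans hN.le

theorem exists_mem_Zr {ρ : ℝ} (hρ : 0 < ρ) {u : List ι} {z : M} (hz : z ∈ S.Xs u)
    (hu : ρ < diam (S.Xs u)) : ∃ v ∈ Zr S.Xs ρ, u <+: v ∧ z ∈ S.Xs v := by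
  obtain ⟨N, hN⟩ := S.exists_length_diam_Xs_le hρ
  suffices ∀ k, ∀ u : List ι, N ≤ u.length + k → z ∈ S.Xs u → ρ < diam (S.Xs u) →
      ∃ v ∈ Zr S.Xs ρ, u <+: v ∧ z ∈ S.Xs v from this N u (by omega) hz hu
  intro k
  induction k with
  | zero => exact fun u hNu _ hu => absurd (hN u hNu) hu.not_ge
  | succ k ih =>
    intro u hNu hz hu
    obtain ⟨a, ha⟩ := S.exists_mem_Xs_append_singleton hz
    by_cases hsmall : diam (S.Xs (u ++ [a])) ≤ ρ
    · exact ⟨u ++ [a], ⟨by simp, hsmall, Or.inr (by rwa [List.dropLast_concat])⟩,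
        List.prefix_append _ _, ha⟩
    · obtain ⟨v, hv, huv, hzv⟩ := ih (u ++ [a]) (by simp; omega) ha (not_le.1 hsmall)
      exact ⟨v, hv, (List.prefix_append _ _).trans huv, hzv⟩

theorem exists_prefix_diam_le {w : List ι} {y : M} (hy : y ∈ S.Xs w) {η : ℝ} (hη : 0 < η) :
    ∃ V, w <+: V ∧ V ≠ [] ∧ y ∈ S.Xs V ∧ diam (S.Xs V) ≤ η := by
  obtain ⟨N, hN⟩ := S.exists_length_diam_Xs_le hη
  have hext : ∀ k, ∃ V, w <+: V ∧ V.length = w.length + k ∧ y ∈ S.Xs V := by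
    intro k
    induction k with
    | zero => exact ⟨w, List.prefix_refl w, rfl, hy⟩
    | succ k ih =>
      obtain ⟨V, hwV, hV, hyV⟩ := ih
      obtain ⟨a, ha⟩ := S.exists_mem_Xs_append_singleton hyV
      exact ⟨V ++ [a], hwV.trans (List.prefix_append _ _), by simp [hV]; omega, ha⟩
  obtain ⟨V, hwV, hV, hyV⟩ := hext (N + 1)
  exact ⟨V, hwV, List.ne_nil_of_length_pos (by omega), hyV, hN V (by omega)⟩

theorem exists_forall_mem_Xs_flatten_replicate (V : List ι) :
    ∃ y, ∀ n, y ∈ S.Xs (List.replicate n V).flatten := by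
  have hanti : ∀ n,
      S.Xs (List.replicate (n + 1) V).flatten ⊆ S.Xs (List.replicate n V).flatten :=
    fun n => S.Xs_anti ⟨V, by rw [List.replicate_succ', List.flatten_concat]⟩
  obtain ⟨y, hy⟩ := IsCompact.nonempty_iInter_of_sequence_nonempty_isCompact_isClosed
    (fun n => S.Xs (List.replicate n V).flatten) hanti
    (fun n => S.E_nonempty.image _) (S.isCompact_Xs _) fun n => (S.isCompact_Xs _).isClosed
  exact ⟨y, mem_iInter.1 hy⟩

theorem tendsto_lowerRatio_flatten_replicate {V : List ι} (hV : V ≠ []) :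
    Tendsto (fun n => S.lowerRatio (List.replicate n V).flatten) atTop (𝓝 0) := by
  have hdiam : ∀ n, diam (S.Xs (List.replicate n V).flatten) ≤ S.shi V ^ n * diam S.E := by
    intro n
    induction n with
    | zero => simp [Xs_nil]
    | succ n ih =>
      rw [List.replicate_succ, List.flatten_cons, pow_succ', mul_assoc]
      refine (S.diam_Xs_append_le _ _).trans ?_
      rw [upperRatio, if_neg hV]
      exact mul_le_mul_of_nonneg_left ih ((S.slo_pos V hV).le.trans (S.slo_le_shi V hV))
  refine squeeze_zero (fun n => (S.lowerRatio_pos _).le) (fun n => ?_)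
    (tendsto_pow_atTop_nhds_zero_of_lt_one ((S.slo_pos V hV).le.trans (S.slo_le_shi V hV))
      (S.shi_lt_one V hV))
  rw [← mul_le_mul_iff_of_pos_right S.diamE_pos]
  have h := S.lowerRatio_mul_diam_le (List.replicate n V).flatten []
  rw [List.append_nil, Xs_nil] at h
  exact h.trans (hdiam n)

def HasCloseBranches (δ : ℝ) (y : M) : Prop :=
  ∃ (a b : ι) (i j : List ι), a ≠ b ∧
    dist (comp S.φ (a :: i) y) (comp S.φ (b :: j) y) < δ * diam (S.Xs (a :: i))

theorem hasCloseBranches_of_not_disjoint {δ : ℝ} (hδ : 0 < δ) {y : M} {i j : List ι}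
    (hij : Incomp i j) (hij' : ¬Disjoint (ball (comp S.φ i y) (δ * diam (S.Xs i)))
      (ball (comp S.φ j y) (δ * diam (S.Xs j)))) :
    S.HasCloseBranches (2 * S.D * δ) y := by
  have hd := not_le.1 (mt ball_disjoint_ball hij')
  rw [← mul_add] at hd
  obtain ⟨k, a, b, i, j, hab, rfl, rfl⟩ := hij.exists_common_prefix
  rw [comp_append, comp_append] at hd
  have hsum : 0 ≤ diam (S.Xs (a :: i)) + diam (S.Xs (b :: j)) := by positivity
  have hdist : dist (comp S.φ (a :: i) y) (comp S.φ (b :: j) y) <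
      S.D * δ * (diam (S.Xs (a :: i)) + diam (S.Xs (b :: j))) := by
    refine lt_of_mul_lt_mul_left ?_ (S.lowerRatio_pos k).le
    calc S.lowerRatio k * dist (comp S.φ (a :: i) y) (comp S.φ (b :: j) y)
        ≤ dist (comp S.φ k (comp S.φ (a :: i) y)) (comp S.φ k (comp S.φ (b :: j) y)) :=
          S.lowerRatio_mul_dist_le k _ _
      _ < δ * (diam (S.Xs (k ++ a :: i)) + diam (S.Xs (k ++ b :: j))) := hd
      _ ≤ δ * (S.upperRatio k * diam (S.Xs (a :: i)) +
            S.upperRatio k * diam (S.Xs (b :: j))) := by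
          gcongr
          exacts [S.diam_Xs_append_le k _, S.diam_Xs_append_le k _]
      _ ≤ S.lowerRatio k * (S.D * δ * (diam (S.Xs (a :: i)) + diam (S.Xs (b :: j)))) := by
          nlinarith [mul_le_mul_of_nonneg_right (S.upperRatio_le k) (mul_nonneg hδ.le hsum)]
  have hD := S.D_pos
  rcases le_total (diam (S.Xs (b :: j))) (diam (S.Xs (a :: i))) with h | h
  · refine ⟨a, b, i, j, hab, ?_⟩
    nlinarith [mul_le_mul_of_nonneg_left h (mul_nonneg hD.le hδ.le)]
  · refine ⟨b, a, j, i, hab.symm, ?_⟩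
    rw [dist_comm]
    nlinarith [mul_le_mul_of_nonneg_left h (mul_nonneg hD.le hδ.le)]

/-- `m` branches splitting off the path to `X_w`, each passing `ε diam X_w`-close to the point
`y ∈ X_w` and of diameter at least `c diam X_w`; the `l`-th branch is `stem l ++ [right l]`,
while the path to `w` continues with `stem l ++ [left l]`. -/
structure Cluster (m : ℕ) (c ε : ℝ) where
  w : List ι
  y : M
  y_mem : y ∈ S.Xs w
  stem : Fin m → List ι
  left : Fin m → ι
  right : Fin m → ι
  z : Fin m → M
  left_ne_right : ∀ l, left l ≠ right l
  stem_left_prefix : ∀ l, stem l ++ [left l] <+: w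
  stem_left_prefix_stem : ∀ l l', l < l' → stem l ++ [left l] <+: stem l'
  z_mem : ∀ l, z l ∈ S.Xs (stem l ++ [right l])
  dist_z_le : ∀ l, dist y (z l) ≤ ε * diam (S.Xs w)
  le_diam_branch : ∀ l, c * diam (S.Xs w) ≤ diam (S.Xs (stem l ++ [right l]))

variable {S} {m : ℕ} {c ε : ℝ}

theorem Cluster.dist_comp_z_le (C : S.Cluster m c ε) (p : List ι) (l : Fin m) :
    dist (comp S.φ p C.y) (comp S.φ p (C.z l)) ≤ S.D * ε * diam (S.Xs (p ++ C.w)) := by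
  refine le_of_mul_le_mul_right ?_ (S.diam_Xs_pos C.w)
  calc dist (comp S.φ p C.y) (comp S.φ p (C.z l)) * diam (S.Xs C.w)
      ≤ S.D * dist C.y (C.z l) * diam (S.Xs (p ++ C.w)) := S.dist_comp_mul_le p C.w C.y (C.z l)
    _ ≤ S.D * (ε * diam (S.Xs C.w)) * diam (S.Xs (p ++ C.w)) := by
        gcongr
        exacts [S.D_pos.le, C.dist_z_le l]
    _ = S.D * ε * diam (S.Xs (p ++ C.w)) * diam (S.Xs C.w) := by ring

theorem Cluster.le_diam_comp_branch (C : S.Cluster m c ε) (p : List ι) (l : Fin m) :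
    c / S.D * diam (S.Xs (p ++ C.w)) ≤ diam (S.Xs (p ++ C.stem l ++ [C.right l])) := by
  rw [List.append_assoc, div_mul_eq_mul_div, div_le_iff₀ S.D_pos]
  refine le_of_mul_le_mul_right ?_ (S.diam_Xs_pos C.w)
  nlinarith [S.diam_Xs_append_mul_le p C.w (C.stem l ++ [C.right l]), C.le_diam_branch l,
    S.diam_Xs_pos (p ++ C.w)]

/-- Push the cluster forward by `φ_{a :: i}` and add a branch through `z₀` starting with `b`. -/
def Cluster.cons (C : S.Cluster m c ε) {a b : ι} (hab : a ≠ b) (i : List ι)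
    {z₀ : M} (hz₀ : z₀ ∈ S.Xs [b])
    (hdist : dist (comp S.φ (a :: i) C.y) z₀ ≤ S.D * ε * diam (S.Xs (a :: i ++ C.w)))
    (hdiam : c / S.D * diam (S.Xs (a :: i ++ C.w)) ≤ diam (S.Xs [b])) :
    S.Cluster (m + 1) (c / S.D) (S.D * ε) where
  w := a :: i ++ C.w
  y := comp S.φ (a :: i) C.y
  y_mem := by rw [Xs_append]; exact mem_image_of_mem _ C.y_mem
  stem := Fin.cons [] fun l => a :: i ++ C.stem l
  left := Fin.cons a C.left
  right := Fin.cons b C.right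
  z := Fin.cons z₀ fun l => comp S.φ (a :: i) (C.z l)
  left_ne_right := Fin.cases hab C.left_ne_right
  stem_left_prefix := Fin.cases ⟨i ++ C.w, rfl⟩ fun l => by
    simpa only [Fin.cons_succ, List.append_assoc] using
      (List.prefix_append_right_inj (a :: i)).2 (C.stem_left_prefix l)
  stem_left_prefix_stem l l' := by
    refine Fin.cases ?_ (fun k => ?_) l <;> refine Fin.cases ?_ (fun k' => ?_) l' <;> intro h
    · exact absurd h (lt_irrefl 0)
    · exact ⟨i ++ C.stem k', by simp⟩
    · exact absurd h (Fin.succ_pos k).not_gt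
    · simpa [List.append_assoc] using
        C.stem_left_prefix_stem k k' (Fin.succ_lt_succ_iff.1 h)
  z_mem := Fin.cases hz₀ fun l => by
    simp only [Fin.cons_succ]
    rw [List.append_assoc, Xs_append]
    exact mem_image_of_mem _ (C.z_mem l)
  dist_z_le := Fin.cases hdist (C.dist_comp_z_le (a :: i))
  le_diam_branch := Fin.cases hdiam (C.le_diam_comp_branch (a :: i))

/-- The new branch comes from `HasCloseBranches` at `y`, with `δ` chosen so that closeness relative
to `diam X_{a :: i}` becomes closeness relative to `diam X_{a :: i ++ w}`. -/
theorem Cluster.nonempty_succ (C : S.Cluster m c ε) (hε : 0 < ε)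
    (hc : ∀ a, c * diam S.E ≤ S.D * diam (S.Xs [a]))
    (hclose : ∀ δ > 0, ∀ y ∈ S.E, S.HasCloseBranches δ y) :
    Nonempty (S.Cluster (m + 1) (c / S.D) (S.D * ε)) := by
  have hD := S.D_pos
  have hE := S.diamE_pos
  have hr := S.diam_Xs_pos C.w
  obtain ⟨a, b, i, j, hab, hdist⟩ := hclose (ε * diam (S.Xs C.w) / (S.D * diam S.E))
    (by positivity) C.y (S.Xs_subset_E _ C.y_mem)
  have hz₀ : comp S.φ (b :: j) C.y ∈ S.Xs [b] :=
    mem_image_of_mem (S.φ b) (S.comp_mem_E (S.Xs_subset_E _ C.y_mem) j)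
  have h := S.diam_Xs_append_mul_le (a :: i) [] C.w
  rw [List.append_nil, Xs_nil] at h
  refine ⟨C.cons hab i hz₀ ?_ ?_⟩
  · calc dist (comp S.φ (a :: i) C.y) (comp S.φ (b :: j) C.y)
        ≤ ε * diam (S.Xs C.w) / (S.D * diam S.E) * diam (S.Xs (a :: i)) := hdist.le
      _ = ε * (diam (S.Xs (a :: i)) * diam (S.Xs C.w)) / (S.D * diam S.E) := by ring
      _ ≤ ε * (S.D * diam S.E * diam (S.Xs (a :: i ++ C.w))) / (S.D * diam S.E) := by gcongr
      _ = 1 * ε * diam (S.Xs (a :: i ++ C.w)) := by field_simp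
      _ ≤ S.D * ε * diam (S.Xs (a :: i ++ C.w)) := by gcongr; exact S.one_le_D
  · rw [div_mul_eq_mul_div, div_le_iff₀ hD]
    rcases le_or_gt 0 c with hc0 | hc0
    · nlinarith [S.diam_Xs_le_diam_E (a :: i ++ C.w), hc b]
    · nlinarith [S.diam_Xs_pos (a :: i ++ C.w), S.diam_Xs_pos [b]]

theorem Cluster.dist_comp_z_lt (C : S.Cluster m c ε) (hcε : 4 * S.D ^ 2 * ε < c) {V u : List ι}
    {y' : M} (hyV : C.y ∈ S.Xs V) (hV : diam (S.Xs V) ≤ ε * diam (S.Xs C.w))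
    (hy' : y' ∈ S.Xs (u ++ V)) (l : Fin m) :
    dist (comp S.φ u (C.z l)) y' < c / (2 * S.D) * (S.lowerRatio u * diam (S.Xs C.w)) := by
  have hD := S.D_pos
  have hr := S.diam_Xs_pos C.w
  have hΛ := S.lowerRatio_pos u
  have h1 : dist (comp S.φ u (C.z l)) (comp S.φ u C.y) ≤ S.upperRatio u * (ε * diam (S.Xs C.w)) :=
    (S.dist_comp_le u _ _).trans (mul_le_mul_of_nonneg_left
      (dist_comm C.y (C.z l) ▸ C.dist_z_le l) (S.upperRatio_nonneg u))
  have h2 : dist (comp S.φ u C.y) y' ≤ S.upperRatio u * (ε * diam (S.Xs C.w)) :=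
    (dist_le_diam_of_mem (S.isBounded_Xs _)
      (by rw [Xs_append]; exact mem_image_of_mem _ hyV) hy').trans
      ((S.diam_Xs_append_le u V).trans (mul_le_mul_of_nonneg_left hV (S.upperRatio_nonneg u)))
  have h3 : S.upperRatio u * (ε * diam (S.Xs C.w)) ≤ S.D * S.lowerRatio u * (ε * diam (S.Xs C.w)) :=
    mul_le_mul_of_nonneg_right (S.upperRatio_le u) (diam_nonneg.trans hV)
  have h4 : 2 * (S.D * S.lowerRatio u * (ε * diam (S.Xs C.w))) <
      c / (2 * S.D) * (S.lowerRatio u * diam (S.Xs C.w)) := by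
    rw [div_mul_eq_mul_div, lt_div_iff₀ (by positivity)]
    nlinarith [mul_lt_mul_of_pos_right hcε (mul_pos hΛ hr)]
  linarith [dist_triangle (comp S.φ u (C.z l)) (comp S.φ u C.y) y']

/-- Pushing the cluster forward by `φ_u` and refining to the scale `ρ`, the path through `y'` and
the `m` branches give `m + 1` pairwise incomparable words of `Z(y', ρ)`. -/
theorem Cluster.le_encard_Zx (C : S.Cluster m c ε) (hc : 0 < c) (hc1 : c ≤ 1)
    (hcε : 4 * S.D ^ 2 * ε < c) {V u : List ι} {y' : M} (hwV : C.w <+: V)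
    (hyV : C.y ∈ S.Xs V) (hV : diam (S.Xs V) ≤ ε * diam (S.Xs C.w))
    (hy' : y' ∈ S.Xs (u ++ V)) :
    ((m + 1 : ℕ) : ℕ∞) ≤
      (Zx S.Xs y' (c / (2 * S.D) * (S.lowerRatio u * diam (S.Xs C.w)))).encard := by
  set ρ := c / (2 * S.D) * (S.lowerRatio u * diam (S.Xs C.w))
  have hD := S.D_pos
  have hr := S.diam_Xs_pos C.w
  have hΛ := S.lowerRatio_pos u
  have hρ : 0 < ρ := by positivity
  have hρ_lt : ∀ {t : ℝ}, c ≤ t → ρ < t * (S.lowerRatio u * diam (S.Xs C.w)) := fun ht =>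
    mul_lt_mul_of_pos_right ((div_lt_self hc (by nlinarith [S.one_le_D])).trans_le ht)
      (by positivity)
  obtain ⟨v₀, hv₀, huv₀, hy'v₀⟩ := S.exists_mem_Zr hρ
    (S.Xs_anti ((List.prefix_append_right_inj u).2 hwV) hy')
    (hρ_lt hc1 |>.trans_le (by simpa using S.lowerRatio_mul_diam_le u C.w))
  choose v hv huv hzv using fun l => S.exists_mem_Zr hρ
    (by rw [Xs_append]; exact mem_image_of_mem _ (C.z_mem l) : comp S.φ u (C.z l) ∈
      S.Xs (u ++ (C.stem l ++ [C.right l])))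
    ((hρ_lt le_rfl).trans_le (by
      nlinarith [S.lowerRatio_mul_diam_le u (C.stem l ++ [C.right l]), C.le_diam_branch l]))
  refine le_encard_of_pairwise_incomp (Fin.cons v₀ v) ?_ (Fin.cases ⟨hv₀, y', hy'v₀,
    mem_ball_self hρ⟩ fun l => ⟨hv l, _, hzv l, C.dist_comp_z_lt hcε hyV hV hy' l⟩)
  refine pairwise_incomp_cons (g := fun l => u ++ C.stem l) C.left_ne_right
    (fun l l' h => ?_) (fun l => ?_) (fun l => ?_)
  · simpa [List.append_assoc] using C.stem_left_prefix_stem l l' h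
  · simpa [List.append_assoc] using
      ((List.prefix_append_right_inj u).2 (C.stem_left_prefix l)).trans huv₀
  · simpa [List.append_assoc] using huv l

theorem Cluster.exists_frequently_le_encard_Zx (C : S.Cluster m c ε)
    (hc : 0 < c) (hc1 : c ≤ 1) (hε : 0 < ε) (hcε : 4 * S.D ^ 2 * ε < c) :
    ∃ y ∈ limitSet S.Xs, ∃ᶠ ρ in 𝓝[>] 0, ((m + 1 : ℕ) : ℕ∞) ≤ (Zx S.Xs y ρ).encard := by
  have hr := S.diam_Xs_pos C.w
  have hD := S.D_pos
  obtain ⟨V, hwV, hV0, hyV, hV⟩ := S.exists_prefix_diam_le C.y_mem (mul_pos hε hr)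
  obtain ⟨y', hy'⟩ := S.exists_forall_mem_Xs_flatten_replicate V
  refine ⟨y', S.mem_limitSet (by simpa [Xs_nil] using hy' 0), ?_⟩
  have hρ : Tendsto (fun n => c / (2 * S.D) *
      (S.lowerRatio (List.replicate n V).flatten * diam (S.Xs C.w))) atTop (𝓝[>] 0) := by
    refine tendsto_nhdsWithin_iff.2 ⟨?_, Eventually.of_forall fun n => ?_⟩
    · simpa using ((S.tendsto_lowerRatio_flatten_replicate hV0).mul_const _).const_mul _
    · have := S.lowerRatio_pos (List.replicate n V).flatten
      exact mem_Ioi.2 (by positivity)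
  refine hρ.frequently (Frequently.of_forall fun n => C.le_encard_Zx hc hc1 hcε hwV hyV hV ?_)
  simpa [List.replicate_succ'] using hy' (n + 1)

variable (S)

theorem exists_cluster (hclose : ∀ δ > 0, ∀ y ∈ S.E, S.HasCloseBranches δ y)
    (hc0 : 0 ≤ c) (hc : ∀ a, c * diam S.E ≤ diam (S.Xs [a])) :
    ∀ (m : ℕ) {ε : ℝ}, 0 < ε → Nonempty (S.Cluster m (c / S.D ^ m) ε)
  | 0, _, _ =>
    let ⟨y, hy⟩ := S.E_nonempty
    ⟨{  w := []
        y := y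
        y_mem := by rwa [Xs_nil]
        stem := Fin.elim0
        left := Fin.elim0
        right := Fin.elim0
        z := Fin.elim0
        left_ne_right := fun l => l.elim0
        stem_left_prefix := fun l => l.elim0
        stem_left_prefix_stem := fun l => l.elim0
        z_mem := fun l => l.elim0
        dist_z_le := fun l => l.elim0
        le_diam_branch := fun l => l.elim0 }⟩
  | m + 1, ε, hε => by
    have hD := S.D_pos
    obtain ⟨C⟩ := exists_cluster hclose hc0 hc m (div_pos hε hD)
    have hc' : ∀ a, c / S.D ^ m * diam S.E ≤ S.D * diam (S.Xs [a]) := fun a =>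
      calc c / S.D ^ m * diam S.E ≤ c * diam S.E := by
            gcongr; exact div_le_self hc0 (one_le_pow₀ S.one_le_D)
        _ ≤ 1 * diam (S.Xs [a]) := by rw [one_mul]; exact hc a
        _ ≤ S.D * diam (S.Xs [a]) := by gcongr; exact S.one_le_D
    have := C.nonempty_succ (div_pos hε hD) hc' hclose
    rwa [div_div, ← pow_succ, mul_div_cancel₀ _ hD.ne'] at this

theorem not_FCP (hclose : ∀ δ > 0, ∀ y ∈ S.E, S.HasCloseBranches δ y) : ¬FCP S.Xs := by
  rintro ⟨K, hK⟩
  have hD := S.D_pos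
  obtain ⟨c, hc0, hc1, hc⟩ := S.exists_pos_mul_diam_E_le
  set c' := c / S.D ^ K
  have hc' : 0 < c' := by positivity
  have hε : 4 * S.D ^ 2 * (c' / (8 * S.D ^ 2)) = c' / 2 := by field_simp; ring
  obtain ⟨C⟩ := S.exists_cluster hclose hc0.le hc K (ε := c' / (8 * S.D ^ 2)) (by positivity)
  obtain ⟨y, hy, hfreq⟩ := C.exists_frequently_le_encard_Zx hc'
    ((div_le_self hc0.le (one_le_pow₀ S.one_le_D)).trans hc1) (by positivity)
    (by rw [hε]; linarith)
  have hle : ((K + 1 : ℕ) : ℕ∞) ≤ K := (le_limsup_of_frequently_le hfreq).trans (hK y hy)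
  exact absurd (Nat.cast_le.1 hle) (Nat.not_succ_le_self K)

end SCIFS

end Moran

theorem stmt13_general {ι M : Type*} [Fintype ι] [MetricSpace M]
    (S : Moran.SCIFS ι M) (hFCP : Moran.FCP S.Xs) :
    ∃ δ : ℝ, 0 < δ ∧ ∃ x ∈ S.E, ∀ i j : List ι, i ≠ [] → j ≠ [] →
      Moran.Incomp i j →
        Disjoint
          (Metric.ball (Moran.comp S.φ i x) (δ * Metric.diam (S.Xs i)))
          (Metric.ball (Moran.comp S.φ j x) (δ * Metric.diam (S.Xs j))) := by
  by_contra hcon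
  push Not at hcon
  refine S.not_FCP (fun δ hδ y hy => ?_) hFCP
  have hD := S.D_pos
  obtain ⟨i, j, -, -, hij, hij'⟩ := hcon (δ / (2 * S.D)) (by positivity) y hy
  simpa [mul_div_cancel₀ _ (by positivity : 2 * S.D ≠ 0)] using
    S.hasCloseBranches_of_not_disjoint (by positivity) hij hij'

/-- For a semiconformal IFS on a complete doubling metric space whose
construction `{φ_i(E)}` has the finite clustering property, there exist `δ > 0` and
`x ∈ E` with `B(φ_i(x), δ diam(φ_i(E))) ∩ B(φ_j(x), δ diam(φ_j(E))) = ∅` whenever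
`i ⊥ j`. -/
theorem stmt13 {ι M : Type*} [Fintype ι] [MetricSpace M] [CompleteSpace M]
    (hcard : 2 ≤ Fintype.card ι) (hM : Moran.DoublingSpace M)
    (S : Moran.SCIFS ι M) (hFCP : Moran.FCP S.Xs) :
    ∃ δ : ℝ, 0 < δ ∧ ∃ x ∈ S.E, ∀ i j : List ι, i ≠ [] → j ≠ [] →
      Moran.Incomp i j →
        Disjoint
          (Metric.ball (Moran.comp S.φ i x) (δ * Metric.diam (S.Xs i)))
          (Metric.ball (Moran.comp S.φ j x) (δ * Metric.diam (S.Xs j))) :=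
  stmt13_general S hFCP
end

section
/- A semiconformal iterated function system is properly semiconformal if and only if there is an essential open set W with W ≠ M such that for each x ∈ W there is r_x > 0 so that B(φ_i(x), s̲_i·r) ⊂ φ_i(B(x,r)) whenever x ∈ W, 0 < r ≤ r_x and i ∈ I*. -/
open Metric Set Filter MeasureTheory Topology
open scoped ENNReal ENat

/-! Both conditions compare distances at `φ_i(x)` with `ρ = dist(x, M ∖ W)`, pointwise in `x`.
Semiconformality gives `s̲_i ρ ≤ dist(φ_i x, φ_i(M ∖ W)) ≤ D s̲_i ρ`, so proper semiconformality
says that `dist(φ_i x, M ∖ φ_i W)` is at least a fixed multiple of `s̲_i`, while the ball condition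
says `dist(φ_i x, M ∖ φ_i W) ≥ s̲_i r` for small `r`: a ball around `φ_i x` inside `φ_i W` pulls
back, by the lower bound `s̲_i`, into a ball around `x`. -/

namespace Moran

section LowerBoundedMaps

variable {X Y : Type*} [MetricSpace X] [MetricSpace Y] {f : X → Y} {s : ℝ}

lemma injective_of_mul_dist_le (hs : 0 < s) (hf : ∀ x y, s * dist x y ≤ dist (f x) (f y)) :
    Function.Injective f := fun x y hxy => by
  have h := hf x y
  rw [hxy, dist_self] at h
  exact dist_le_zero.1 (nonpos_of_mul_nonpos_right h hs)

lemma mul_infDist_le_infDist_image (hs : 0 ≤ s) (hf : ∀ x y, s * dist x y ≤ dist (f x) (f y))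
    (x : X) (A : Set X) : s * infDist x A ≤ infDist (f x) (f '' A) := by
  rcases A.eq_empty_or_nonempty with rfl | hA
  · simp
  rw [le_infDist (hA.image f)]
  rintro _ ⟨a, ha, rfl⟩
  exact (mul_le_mul_of_nonneg_left (infDist_le_dist_of_mem ha) hs).trans (hf x a)

lemma infDist_image_le_mul {t : ℝ} (ht : 0 < t) (hf : ∀ x y, dist (f x) (f y) ≤ t * dist x y)
    (x : X) (A : Set X) : infDist (f x) (f '' A) ≤ t * infDist x A := by
  rcases A.eq_empty_or_nonempty with rfl | hA
  · simp
  rw [← div_le_iff₀' ht, le_infDist hA]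
  intro a ha
  rw [div_le_iff₀' ht]
  exact (infDist_le_dist_of_mem (mem_image_of_mem f ha)).trans (hf x a)

lemma le_infDist_compl_of_ball_subset {T : Set Y} (hT : Tᶜ.Nonempty) {y : Y} {t : ℝ}
    (h : ball y t ⊆ T) : t ≤ infDist y Tᶜ :=
  (le_infDist hT).2 fun _ hz => not_lt.1 fun hlt => hz (h (mem_ball'.2 hlt))

lemma ball_subset_image_ball (hs : 0 < s) (hf : ∀ x y, s * dist x y ≤ dist (f x) (f y))
    {x : X} {r : ℝ} (h : ball (f x) (s * r) ⊆ range f) : ball (f x) (s * r) ⊆ f '' ball x r := by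
  intro y hy
  obtain ⟨z, rfl⟩ := h hy
  exact ⟨z, mem_ball.2 (lt_of_mul_lt_mul_left ((hf z x).trans_lt (mem_ball.1 hy)) hs.le), rfl⟩

lemma ball_subset_image_ball_of_infDist_le (hs : 0 < s)
    (hf : ∀ x y, s * dist x y ≤ dist (f x) (f y)) {W : Set X} {x : X} {lam r : ℝ} (hlam : 0 < lam)
    (hproper : infDist (f x) (f '' Wᶜ) ≤ lam * infDist (f x) (f '' W)ᶜ)
    (hr : r ≤ infDist x Wᶜ / lam) : ball (f x) (s * r) ⊆ f '' ball x r := by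
  have hsr : s * r ≤ infDist (f x) (f '' W)ᶜ :=
    calc s * r ≤ s * infDist x Wᶜ / lam := by rw [mul_div_assoc]; gcongr
      _ ≤ infDist (f x) (f '' Wᶜ) / lam := by
        gcongr; exact mul_infDist_le_infDist_image hs.le hf x _
      _ ≤ infDist (f x) (f '' W)ᶜ := by rwa [div_le_iff₀' hlam]
  exact ball_subset_image_ball hs hf
    ((ball_subset_ball hsr).trans (ball_infDist_compl_subset.trans (image_subset_range f W)))

lemma infDist_le_mul_infDist_of_ball_subset (hs : 0 < s)
    (hlo : ∀ x y, s * dist x y ≤ dist (f x) (f y)) {D : ℝ} (hD : 0 < D)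
    (hhi : ∀ x y, dist (f x) (f y) ≤ D * s * dist x y) {W : Set X} (hW : W ≠ univ) {x : X}
    {m : ℝ} (hm : 0 < m) (hmW : ball x m ⊆ W) (hball : ball (f x) (s * m) ⊆ f '' ball x m) :
    infDist (f x) (f '' Wᶜ) ≤ D * infDist x Wᶜ / m * infDist (f x) (f '' W)ᶜ := by
  obtain ⟨w, hw⟩ := nonempty_compl.2 hW
  have hcompl : ((f '' W)ᶜ).Nonempty :=
    ⟨f w, (injective_of_mul_dist_le hs hlo).mem_set_image.not.2 hw⟩
  have hsm : s * m ≤ infDist (f x) (f '' W)ᶜ :=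
    le_infDist_compl_of_ball_subset hcompl (hball.trans (image_mono hmW))
  calc infDist (f x) (f '' Wᶜ) ≤ D * s * infDist x Wᶜ := infDist_image_le_mul (by positivity) hhi x _
    _ = D * infDist x Wᶜ / m * (s * m) := by field_simp
    _ ≤ D * infDist x Wᶜ / m * infDist (f x) (f '' W)ᶜ :=
      mul_le_mul_of_nonneg_left hsm (div_nonneg (mul_nonneg hD.le infDist_nonneg) hm.le)

end LowerBoundedMaps

variable {ι M : Type*} [Fintype ι] [MetricSpace M] (S : SCIFS ι M)

lemma SCIFS.dist_comp_le_D_mul_slo {i : List ι} (hi : i ≠ []) (x y : M) :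
    dist (comp S.φ i x) (comp S.φ i y) ≤ S.D * S.slo i * dist x y :=
  (S.upper i hi x y).trans (by gcongr; exact S.shi_le_D_slo i hi)

theorem SCIFS.exists_lambda_iff_exists_radius {W : Set M} (hWo : IsOpen W) (hW : W ≠ univ) {x : M}
    (hx : x ∈ W) :
    (∃ lam : ℝ, 1 ≤ lam ∧ ∀ i : List ι, i ≠ [] →
        infDist (comp S.φ i x) (comp S.φ i '' Wᶜ) ≤
          lam * infDist (comp S.φ i x) ((comp S.φ i '' W)ᶜ)) ↔
      ∃ rx : ℝ, 0 < rx ∧ ∀ r : ℝ, 0 < r → r ≤ rx → ∀ i : List ι, i ≠ [] →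
        ball (comp S.φ i x) (S.slo i * r) ⊆ comp S.φ i '' ball x r := by
  have hρ : 0 < infDist x Wᶜ :=
    (hWo.isClosed_compl.notMem_iff_infDist_pos (nonempty_compl.2 hW)).1 (not_not.2 hx)
  constructor
  · rintro ⟨lam, hlam, hproper⟩
    exact ⟨infDist x Wᶜ / lam, by positivity, fun r _ hr i hi =>
      ball_subset_image_ball_of_infDist_le (S.slo_pos i hi) (S.lower i hi) (by linarith)
        (hproper i hi) hr⟩
  · rintro ⟨rx, hrx, hball⟩
    set m := min (infDist x Wᶜ) rx
    have hm : 0 < m := lt_min hρ hrx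
    have hmW : ball x m ⊆ W := (ball_subset_ball (min_le_left _ _)).trans ball_infDist_compl_subset
    refine ⟨max 1 (S.D * infDist x Wᶜ / m), le_max_left _ _, fun i hi => ?_⟩
    refine (infDist_le_mul_infDist_of_ball_subset (S.slo_pos i hi) (S.lower i hi)
      (by linarith [S.one_le_D]) (S.dist_comp_le_D_mul_slo hi) hW hm hmW
      (hball m hm (min_le_right _ _) i hi)).trans ?_
    gcongr
    · exact infDist_nonneg
    · exact le_max_right _ _

end Moran

theorem stmt15_general {ι M : Type*} [Fintype ι] [MetricSpace M]
    (S : Moran.SCIFS ι M) :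
    Moran.ProperlySC S ↔
      ∃ W : Set M, Moran.EssentialOpen S W ∧ W ≠ Set.univ ∧
        ∀ x ∈ W, ∃ rx : ℝ, 0 < rx ∧ ∀ r : ℝ, 0 < r → r ≤ rx →
          ∀ i : List ι, i ≠ [] →
            Metric.ball (Moran.comp S.φ i x) (S.slo i * r) ⊆
              Moran.comp S.φ i '' Metric.ball x r :=
  exists_congr fun _ => and_congr_right fun hW => and_congr_right fun hWne =>
    forall₂_congr fun _ hx => S.exists_lambda_iff_exists_radius hW.1 hWne hx

/-- A semiconformal IFS is properly semiconformal iff there is an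
essential open set `W ≠ M` such that for each `x ∈ W` there is `r_x > 0` with
`B(φ_i(x), s̲_i·r) ⊆ φ_i(B(x,r))` whenever `0 < r ≤ r_x` and `i ∈ I*`. -/
theorem stmt15 {ι M : Type*} [Fintype ι] [MetricSpace M] [CompleteSpace M]
    (hcard : 2 ≤ Fintype.card ι) (S : Moran.SCIFS ι M) :
    Moran.ProperlySC S ↔
      ∃ W : Set M, Moran.EssentialOpen S W ∧ W ≠ Set.univ ∧
        ∀ x ∈ W, ∃ rx : ℝ, 0 < rx ∧ ∀ r : ℝ, 0 < r → r ≤ rx →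
          ∀ i : List ι, i ≠ [] →
            Metric.ball (Moran.comp S.φ i x) (S.slo i * r) ⊆
              Moran.comp S.φ i '' Metric.ball x r :=
  stmt15_general S
end
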